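/- Let P, Q be nonzero coprime polynomials over a finite field F_q with deg P > deg Q. If s_0, ..., s_k are polynomials over F_q with deg s_i < deg P for all i, and the sum over i of s_i · (P/Q)^i equals 0 in the field of rational functions F_q(X), then s_i = 0 for all i. -/

import Mathlib

/-!
Clearing the denominator `Q^k` turns the relation into `∑ s_i P^i Q^(k-i) = 0`. Reducing
modulo `P` leaves `s_0 Q^k ≡ 0`, so coprimality gives `P ∣ s_0`, and the degree bound forces
`s_0 = 0`; cancelling one factor `P` from the remaining terms gives a relation of the same
shape with one digit fewer.
-/

open Polynomial Finset

section Homogenized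

variable {R : Type*} [CommRing R]

theorem sum_range_succ_mul_pow_mul_pow (s : ℕ → R) (P Q : R) (k : ℕ) :
    ∑ i ∈ range (k + 2), s i * P ^ i * Q ^ (k + 1 - i) =
      s 0 * Q ^ (k + 1) + P * ∑ i ∈ range (k + 1), s (i + 1) * P ^ i * Q ^ (k - i) := by
  rw [sum_range_succ', mul_sum, add_comm]
  congr 1
  · simp
  · refine sum_congr rfl fun i _ => ?_
    rw [Nat.add_sub_add_right]
    ring

theorem eq_zero_of_sum_mul_pow_mul_pow_eq_zero [IsDomain R] {P Q : R} (hP : P ≠ 0)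
    (hPQ : IsCoprime P Q) {k : ℕ} {s : ℕ → R} (hs : ∀ i ≤ k, P ∣ s i → s i = 0)
    (hsum : ∑ i ∈ range (k + 1), s i * P ^ i * Q ^ (k - i) = 0) :
    ∀ i ≤ k, s i = 0 := by
  induction k generalizing s with
  | zero =>
    intro i hi
    obtain rfl : i = 0 := Nat.le_zero.mp hi
    simpa using hsum
  | succ k ih =>
    rw [sum_range_succ_mul_pow_mul_pow] at hsum
    have hs₀ : s 0 = 0 := by
      refine hs 0 k.succ.zero_le ((hPQ.pow_right (n := k + 1)).dvd_of_dvd_mul_right ?_)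
      rw [eq_neg_of_add_eq_zero_left hsum, dvd_neg]
      exact dvd_mul_right _ _
    rw [hs₀, zero_mul, zero_add, mul_eq_zero, or_iff_right hP] at hsum
    have hs_succ := ih (s := fun i => s (i + 1)) (fun i hi => hs (i + 1) (by omega)) hsum
    rintro (_ | i) hi
    exacts [hs₀, hs_succ i (by omega)]

end Homogenized

theorem sum_mul_pow_mul_pow_eq_sum_mul_div_pow_mul_pow {K : Type*} [Field K] {p q : K}
    (hq : q ≠ 0) (a : ℕ → K) (k : ℕ) :
    ∑ i ∈ range (k + 1), a i * p ^ i * q ^ (k - i) =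
      (∑ i ∈ range (k + 1), a i * (p / q) ^ i) * q ^ k := by
  rw [sum_mul]
  refine sum_congr rfl fun i hi => ?_
  rw [← pow_sub_mul_pow q (Nat.lt_succ_iff.mp (mem_range.mp hi)), div_pow]
  field_simp

theorem pq_digit_sum_eq_zero (Fq : Type*) [Field Fq]
    (P Q : Polynomial Fq) (hP : P ≠ 0) (hQ : Q ≠ 0) (hcop : IsCoprime P Q)
    (k : ℕ) (s : ℕ → Polynomial Fq) (hs : ∀ i ≤ k, (s i).degree < P.degree)
    (hsum : ∑ i ∈ Finset.range (k + 1),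
      (algebraMap (Polynomial Fq) (RatFunc Fq) (s i)) *
        ((algebraMap (Polynomial Fq) (RatFunc Fq) P) /
          (algebraMap (Polynomial Fq) (RatFunc Fq) Q)) ^ i = 0) :
    ∀ i ≤ k, s i = 0 := by
  have hQ' : algebraMap (Polynomial Fq) (RatFunc Fq) Q ≠ 0 :=
    (map_ne_zero_iff _ (RatFunc.algebraMap_injective Fq)).mpr hQ
  refine eq_zero_of_sum_mul_pow_mul_pow_eq_zero hP hcop
    (fun i hi hdvd => eq_zero_of_dvd_of_degree_lt hdvd (hs i hi)) ?_
  apply RatFunc.algebraMap_injective Fq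
  simp only [map_sum, map_mul, map_pow, map_zero]
  rw [sum_mul_pow_mul_pow_eq_sum_mul_div_pow_mul_pow hQ', hsum, zero_mul]
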